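/- arXiv:2510.00942 — 2 statements merged into one kernel-verified Lean document; each statement's English description precedes it below -/
import Mathlib

section
/- Let Ω₀ be positive definite, Δ positive semidefinite, and suppose all eigenvalues of Ω₀ + Δ are at most λ_max. Then tr(Ω₀⁻¹) − tr((Ω₀+Δ)⁻¹) ≥ tr(Δ) / λ_max², i.e., the marginal decrease in MSE from adding information matrix Δ is bounded below by tr(Δ) divided by the square of the largest eigenvalue of the augmented matrix. -/
/-!
Write `B = Ω₀ + Δ`. The resolvent identity gives
`Ω₀⁻¹ - B⁻¹ = B⁻¹ Δ B⁻¹ + (Δ B⁻¹)ᴴ Ω₀⁻¹ (Δ B⁻¹)`, whose second term has nonnegative trace.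
For the first, `B ⪯ λ I` forces `B² ⪯ λ² I`, hence `B⁻² ⪰ λ⁻² I`, and
`tr (B⁻¹ Δ B⁻¹) = tr (Δ B⁻²) ≥ tr Δ / λ²` because the trace of a product of two positive
semidefinite matrices is nonnegative.
-/

open Matrix
open scoped ComplexOrder

namespace Matrix

variable {n : Type*} [Fintype n]

lemma PosSemidef.trace_mul_nonneg {𝕜 : Type*} [RCLike 𝕜] {P Q : Matrix n n 𝕜}
    (hP : P.PosSemidef) (hQ : Q.PosSemidef) : 0 ≤ (P * Q).trace := by
  classical
  open scoped MatrixOrder in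
  obtain ⟨X, rfl⟩ := CStarAlgebra.nonneg_iff_eq_star_mul_self.mp hQ.nonneg
  rw [← Matrix.mul_assoc, trace_mul_comm, ← Matrix.mul_assoc]
  exact (hP.mul_mul_conjTranspose_same X).trace_nonneg

variable [DecidableEq n]

lemma inv_sub_inv_add_eq {R : Type*} [CommRing R] {A D : Matrix n n R} (hA : IsUnit A.det)
    (hAD : IsUnit (A + D).det) :
    A⁻¹ - (A + D)⁻¹ = (A + D)⁻¹ * D * (A + D)⁻¹ + (A + D)⁻¹ * D * A⁻¹ * D * (A + D)⁻¹ := by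
  set B := A + D
  have hD : D = B - A := by simp [B]
  have hleft : A⁻¹ - B⁻¹ = B⁻¹ * D * A⁻¹ := by
    rw [hD, Matrix.mul_sub, Matrix.sub_mul, nonsing_inv_mul B hAD, Matrix.one_mul,
      Matrix.mul_assoc, mul_nonsing_inv A hA, Matrix.mul_one]
  have hright : A⁻¹ - B⁻¹ = A⁻¹ * D * B⁻¹ := by
    rw [hD, Matrix.mul_sub, Matrix.sub_mul, nonsing_inv_mul A hA, Matrix.one_mul,
      Matrix.mul_assoc, mul_nonsing_inv B hAD, Matrix.mul_one]
  calc A⁻¹ - B⁻¹ = B⁻¹ * D * A⁻¹ := hleft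
    _ = B⁻¹ * D * (B⁻¹ + (A⁻¹ - B⁻¹)) := by rw [add_sub_cancel]
    _ = _ := by rw [hright, Matrix.mul_add]; simp only [Matrix.mul_assoc]

-- `c • (c² - B²) = c² C + B C B + C B C` with `C = c • 1 - B`: no square root of `B` is needed.
lemma PosSemidef.sq_smul_one_sub_mul_self {B : Matrix n n ℝ} {c : ℝ} (hc : 0 < c)
    (hB : B.PosSemidef) (hBc : (c • 1 - B).PosSemidef) :
    (c ^ 2 • (1 : Matrix n n ℝ) - B * B).PosSemidef := by
  set C := c • (1 : Matrix n n ℝ) - B with hC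
  have key : c ^ 2 • (1 : Matrix n n ℝ) - B * B =
      c⁻¹ • (c ^ 2 • C + Bᴴ * C * B + Cᴴ * B * C) := by
    rw [hB.isHermitian.eq, hBc.isHermitian.eq, hC]
    simp only [sub_mul, mul_sub, Matrix.smul_mul, Matrix.mul_smul, Matrix.one_mul,
      Matrix.mul_one, smul_sub, smul_add, smul_smul, Matrix.mul_assoc]
    field_simp
    module
  rw [key]
  exact (((hBc.smul (sq_nonneg c)).add (hBc.conjTranspose_mul_mul_same B)).add
    (hB.conjTranspose_mul_mul_same C)).smul (inv_nonneg.mpr hc.le)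

lemma PosDef.sq_smul_inv_mul_inv_sub_one {B : Matrix n n ℝ} {c : ℝ} (hc : 0 < c)
    (hB : B.PosDef) (hBc : (c • 1 - B).PosSemidef) :
    (c ^ 2 • (B⁻¹ * B⁻¹) - 1).PosSemidef := by
  have hdet : IsUnit B.det := (isUnit_iff_isUnit_det B).mp hB.isUnit
  have key : c ^ 2 • (B⁻¹ * B⁻¹) - 1 = (B⁻¹)ᴴ * (c ^ 2 • (1 : Matrix n n ℝ) - B * B) * B⁻¹ := by
    rw [hB.inv.isHermitian.eq, Matrix.mul_sub, Matrix.sub_mul, Matrix.mul_smul, Matrix.smul_mul,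
      Matrix.mul_one, ← Matrix.mul_assoc, nonsing_inv_mul B hdet, Matrix.one_mul,
      mul_nonsing_inv B hdet]
  rw [key]
  exact (hB.posSemidef.sq_smul_one_sub_mul_self hc hBc).conjTranspose_mul_mul_same B⁻¹

lemma PosSemidef.trace_le_sq_mul_trace_inv_mul_mul_inv {B Δ : Matrix n n ℝ} {c : ℝ} (hc : 0 < c)
    (hΔ : Δ.PosSemidef) (hB : B.PosDef) (hBc : (c • 1 - B).PosSemidef) :
    Δ.trace ≤ c ^ 2 * (B⁻¹ * Δ * B⁻¹).trace := by
  have h := hΔ.trace_mul_nonneg (hB.sq_smul_inv_mul_inv_sub_one hc hBc)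
  rw [Matrix.mul_sub, Matrix.mul_smul, Matrix.mul_one, trace_sub, trace_smul, smul_eq_mul] at h
  rw [trace_mul_cycle, trace_mul_comm (B⁻¹ * B⁻¹)]
  linarith

end Matrix

theorem marginal_mse_gain_lower_bound {n : ℕ} (Ω₀ Δ : Matrix (Fin n) (Fin n) ℝ)
    (hΩ : Ω₀.PosDef) (hΔ : Δ.PosSemidef) (lmax : ℝ) (hlmax : 0 < lmax)
    (hub : (lmax • (1 : Matrix (Fin n) (Fin n) ℝ) - (Ω₀ + Δ)).PosSemidef) :
    Δ.trace / lmax ^ 2 ≤ (Ω₀⁻¹).trace - ((Ω₀ + Δ)⁻¹).trace := by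
  have hB : (Ω₀ + Δ).PosDef := hΩ.add_posSemidef hΔ
  have hfirst := hΔ.trace_le_sq_mul_trace_inv_mul_mul_inv hlmax hB hub
  have hsecond : 0 ≤ ((Ω₀ + Δ)⁻¹ * Δ * Ω₀⁻¹ * Δ * (Ω₀ + Δ)⁻¹).trace := by
    have h := (hΩ.inv.posSemidef.conjTranspose_mul_mul_same (Δ * (Ω₀ + Δ)⁻¹)).trace_nonneg
    rw [conjTranspose_mul, hΔ.isHermitian.eq, hB.inv.isHermitian.eq] at h
    simpa only [Matrix.mul_assoc] using h
  rw [div_le_iff₀ (by positivity), ← trace_sub,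
    inv_sub_inv_add_eq ((isUnit_iff_isUnit_det _).mp hΩ.isUnit)
      ((isUnit_iff_isUnit_det _).mp hB.isUnit), trace_add]
  linarith [mul_nonneg (sq_nonneg lmax) hsecond]
end

section
/- Let A and B be symmetric positive definite n×n matrices with A ⪯ B, and suppose λ_min · I ⪯ A and B ⪯ λ_max · I where 0 < λ_min ≤ λ_max. If rank(B − A) ≤ k, then tr(A⁻¹) − tr(B⁻¹) ≤ k · (λ_max − λ_min)/(λ_min · λ_max). -/
/-!
Since `A⁻¹ - B⁻¹ = A⁻¹ (B - A) B⁻¹`, the Hermitian matrix `A⁻¹ - B⁻¹` has rank at most `k`.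
Inversion reverses the Loewner order, so `λ_max⁻¹ ⪯ B⁻¹` and `A⁻¹ ⪯ λ_min⁻¹`; hence every eigenvalue
of `A⁻¹ - B⁻¹` is at most `λ_min⁻¹ - λ_max⁻¹`. Its trace is the sum of its at most `k` nonzero
eigenvalues.
-/

open Matrix

namespace Matrix

variable {n : Type*} [Fintype n] [DecidableEq n]

theorem rank_inv_sub_inv_le {R : Type*} [CommRing R] [StrongRankCondition R]
    {A B : Matrix n n R} (h : IsUnit A ↔ IsUnit B) : (A⁻¹ - B⁻¹).rank ≤ (B - A).rank := by
  rw [inv_sub_inv h]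
  exact (rank_mul_le_left _ _).trans (rank_mul_le_right _ _)

theorem inv_smul_one {K : Type*} [Field K] {l : K} (hl : l ≠ 0) :
    (l • (1 : Matrix n n K))⁻¹ = l⁻¹ • 1 := by
  rw [inv_eq_left_inv]
  simp [hl]

theorem PosDef.posSemidef_inv_sub_inv {K : Type*} [Field K] [PartialOrder K] [StarRing K]
    [StarOrderedRing K] {X Y : Matrix n n K} (hX : X.PosDef) (hY : Y.PosDef)
    (h : (Y - X).PosSemidef) : (X⁻¹ - Y⁻¹).PosSemidef := by
  set D := Y - X
  have hYinv : Y⁻¹ᴴ = Y⁻¹ := hY.isHermitian.inv.eq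
  have hDY : (D * Y⁻¹)ᴴ = Y⁻¹ * D := by rw [conjTranspose_mul, hYinv, h.isHermitian.eq]
  have hYDX : Y⁻¹ * D * X⁻¹ = X⁻¹ - Y⁻¹ := by
    rw [mul_sub, sub_mul, nonsing_inv_mul _ (isUnit_iff_isUnit_det _ |>.mp hY.isUnit), one_mul,
      mul_nonsing_inv_cancel_right _ _ (isUnit_iff_isUnit_det _ |>.mp hX.isUnit)]
  have hXDY : X⁻¹ * D * Y⁻¹ = X⁻¹ - Y⁻¹ := (inv_sub_inv (iff_of_true hX.isUnit hY.isUnit)).symm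
  have hsplit : X⁻¹ - Y⁻¹ = Y⁻¹ᴴ * D * Y⁻¹ + (D * Y⁻¹)ᴴ * X⁻¹ * (D * Y⁻¹) := by
    rw [hYinv, hDY, show Y⁻¹ * D * X⁻¹ * (D * Y⁻¹) = Y⁻¹ * D * (X⁻¹ * D * Y⁻¹) by
      simp only [mul_assoc], hXDY, mul_sub (Y⁻¹ * D), hYDX]
    abel
  rw [hsplit]
  exact (h.conjTranspose_mul_mul_same _).add (hX.posSemidef.inv.conjTranspose_mul_mul_same _)

section RCLike

open scoped ComplexOrder

variable {𝕜 : Type*} [RCLike 𝕜] {M : Matrix n n 𝕜} {c : ℝ}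

theorem IsHermitian.eigenvalues_le (hM : M.IsHermitian)
    (h : (c • (1 : Matrix n n 𝕜) - M).PosSemidef) (i : n) : hM.eigenvalues i ≤ c := by
  have hmem : c - hM.eigenvalues i ∈ spectrum ℝ (c • (1 : Matrix n n 𝕜) - M) := by
    rw [← Algebra.algebraMap_eq_smul_one, ← spectrum.singleton_sub_eq]
    exact Set.sub_mem_sub rfl (hM.eigenvalues_mem_spectrum_real i)
  open scoped MatrixOrder in
  have := spectrum_nonneg_of_nonneg (nonneg_iff_posSemidef.mpr h) hmem
  linarith

theorem IsHermitian.re_trace_le_rank_mul (hM : M.IsHermitian)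
    (h : (c • (1 : Matrix n n 𝕜) - M).PosSemidef) : RCLike.re M.trace ≤ M.rank * c := by
  have hre : RCLike.re M.trace = ∑ i, hM.eigenvalues i := by
    simp [hM.trace_eq_sum_eigenvalues]
  rw [hre, hM.rank_eq_card_non_zero_eigs, Fintype.card_subtype, ← nsmul_eq_mul,
    ← Finset.sum_filter_ne_zero]
  exact Finset.sum_le_card_nsmul _ _ _ fun i _ ↦ hM.eigenvalues_le h i

end RCLike

end Matrix

theorem trace_inv_diff_rank_bound_general {n : ℕ} (A B : Matrix (Fin n) (Fin n) ℝ)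
    (k : ℕ) (lmin lmax : ℝ)
    (hA : A.PosDef) (hB : B.PosDef)
    (hrank : (B - A).rank ≤ k)
    (hmin : (A - lmin • (1 : Matrix (Fin n) (Fin n) ℝ)).PosSemidef)
    (hmax : (lmax • (1 : Matrix (Fin n) (Fin n) ℝ) - B).PosSemidef)
    (h0 : 0 < lmin) (hle : lmin ≤ lmax) :
    (A⁻¹).trace - (B⁻¹).trace ≤ (k : ℝ) * (lmax - lmin) / (lmin * lmax) := by
  have hlmax : 0 < lmax := h0.trans_le hle
  have hAinv : (lmin⁻¹ • 1 - A⁻¹).PosSemidef := by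
    simpa [inv_smul_one h0.ne'] using (PosDef.one.smul h0).posSemidef_inv_sub_inv hA hmin
  have hBinv : (B⁻¹ - lmax⁻¹ • 1).PosSemidef := by
    simpa [inv_smul_one hlmax.ne'] using hB.posSemidef_inv_sub_inv (PosDef.one.smul hlmax) hmax
  have hloewner : ((lmin⁻¹ - lmax⁻¹) • 1 - (A⁻¹ - B⁻¹)).PosSemidef := by
    convert hAinv.add hBinv using 1
    module
  have hrank' : (A⁻¹ - B⁻¹).rank ≤ k :=
    (rank_inv_sub_inv_le (iff_of_true hA.isUnit hB.isUnit)).trans hrank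
  calc A⁻¹.trace - B⁻¹.trace = RCLike.re (A⁻¹ - B⁻¹).trace := by simp [trace_sub]
    _ ≤ (A⁻¹ - B⁻¹).rank * (lmin⁻¹ - lmax⁻¹) :=
      (hA.isHermitian.inv.sub hB.isHermitian.inv).re_trace_le_rank_mul hloewner
    _ ≤ k * (lmin⁻¹ - lmax⁻¹) := by
      gcongr
      exact sub_nonneg.mpr (inv_anti₀ h0 hle)
    _ = k * (lmax - lmin) / (lmin * lmax) := by field_simp

theorem trace_inv_diff_rank_bound {n : ℕ} (A B : Matrix (Fin n) (Fin n) ℝ)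
    (k : ℕ) (lmin lmax : ℝ)
    (hA : A.PosDef) (hB : B.PosDef) (hAB : (B - A).PosSemidef)
    (hrank : (B - A).rank ≤ k)
    (hmin : (A - lmin • (1 : Matrix (Fin n) (Fin n) ℝ)).PosSemidef)
    (hmax : (lmax • (1 : Matrix (Fin n) (Fin n) ℝ) - B).PosSemidef)
    (h0 : 0 < lmin) (hle : lmin ≤ lmax) :
    (A⁻¹).trace - (B⁻¹).trace ≤ (k : ℝ) * (lmax - lmin) / (lmin * lmax) :=
  trace_inv_diff_rank_bound_general A B k lmin lmax hA hB hrank hmin hmax h0 hle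
end
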